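/- arXiv:1810.00093 — 2 statements merged into one kernel-verified Lean document; each statement's English description precedes it below -/
import Mathlib

section
/- Suppose B : ℕ × Δ → ℝ satisfies: (i) B(t*, b) > 0 for every b in the teaching-failure set B_f; (ii) B(0, p₀) < 0; and (iii) B(t, f_z(b, y)) − B(t−1, b) ≤ 0 for all t ∈ {1,…,t*}, all z ∈ Z, all y ∈ Y, and all b ∈ Δ. Then every switched trajectory b over horizon t* with b 0 = p₀ satisfies b t* ∉ B_f; equivalently, (b t*) h* ≥ λ, i.e., the teaching performance λ is satisfied at trial t*. -/
/-- **Theorem 1 (barrier certificates verify teaching performance).**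
Given the belief simplex `Δ = stdSimplex ℝ H`, switched belief dynamics `f z : Δ × Y → Δ`,
initial belief `p₀`, target hypothesis `hstar`, performance level `lam ∈ (0,1]` and horizon
`tstar ≥ 1`, if `B : ℕ × Δ → ℝ` satisfies
(i) `B (tstar, b) > 0` on the teaching-failure set `B_f = {b ∈ Δ | b hstar < lam}`,
(ii) `B (0, p₀) < 0`, and
(iii) `B (t, f z (b, y)) − B (t−1, b) ≤ 0` for all `t ∈ {1,…,tstar}`, `z`, `y`, `b ∈ Δ`,
then every switched trajectory with `b 0 = p₀` satisfies `(b tstar) hstar ≥ lam`,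
i.e. `b tstar ∉ B_f`. -/
theorem barrier_certificate_teaching_performance
    {H Z Y : Type*} [Fintype H] [Nonempty H] [Nonempty Z] [Nonempty Y]
    (f : Z → ↥(stdSimplex ℝ H) × Y → ↥(stdSimplex ℝ H))
    (p₀ : ↥(stdSimplex ℝ H)) (hstar : H) (lam : ℝ)
    (hlam0 : 0 < lam) (hlam1 : lam ≤ 1)
    (tstar : ℕ) (htstar : 1 ≤ tstar)
    (B : ℕ × ↥(stdSimplex ℝ H) → ℝ)
    -- (i) positivity on the teaching-failure set
    (hBfail : ∀ b : ↥(stdSimplex ℝ H), b.val hstar < lam → 0 < B (tstar, b))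
    -- (ii) negativity at the initial belief
    (hBinit : B (0, p₀) < 0)
    -- (iii) non-increase along every mode
    (hBdec : ∀ t, 1 ≤ t → t ≤ tstar → ∀ (z : Z) (y : Y) (b : ↥(stdSimplex ℝ H)),
      B (t, f z (b, y)) - B (t - 1, b) ≤ 0)
    -- switched trajectory over horizon tstar starting at p₀
    (b : ℕ → ↥(stdSimplex ℝ H)) (hb0 : b 0 = p₀)
    (hstep : ∀ t, 1 ≤ t → t ≤ tstar → ∃ (z : Z) (y : Y), b t = f z (b (t - 1), y)) :
    lam ≤ (b tstar).val hstar := by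
  have key : ∀ t, t ≤ tstar → B (t, b t) < 0 := by
    intro t
    induction t with
    | zero => intro _; simpa [hb0] using hBinit
    | succ n ih =>
      intro hle
      obtain ⟨z, y, hzy⟩ := hstep (n+1) (Nat.le_add_left 1 n) hle
      have hd := hBdec (n+1) (Nat.le_add_left 1 n) hle z y (b n)
      simp only [Nat.add_sub_cancel] at hd hzy
      rw [hzy]
      have := ih (le_trans (Nat.le_succ n) hle)
      linarith
  by_contra h
  push_neg at h
  have := hBfail (b tstar) h
  have := key tstar le_rfl
  linarith
end

section
/- Suppose there exist: a polynomial barrier B ∈ ℝ[t, b] (a polynomial in the time variable t and the belief variables b h, h ∈ H) of degree at most d in the b-variables, an SOS polynomial p^f ∈ ℝ[b], and constants s₁, s₂ > 0 such that: (19) the polynomial b ↦ B(t*, b) + p^f(b)·(b h* − λ) − s₁ is SOS; (20) −B(0, p₀) − s₂ > 0; and (21) for every t ∈ {1,…,t*}, z ∈ Z, y ∈ Y there is an SOS polynomial Q_{t,z,y} ∈ ℝ[b] such that Q_{t,z,y}(b) = −R_{z,y}(b)^d · ( B(t, S_{z,y}(b)/R_{z,y}(b)) − B(t−1, b) ) for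 every b ∈ ℝ^H with R_{z,y}(b) ≠ 0. Then every switched trajectory b over horizon t* with b 0 = p₀ satisfies (b t*) h* ≥ λ, i.e., the teaching performance λ is satisfied. -/
open MvPolynomial

/-- A real multivariate polynomial is a sum of squares (SOS). -/
def IsSOS {H : Type*} (p : MvPolynomial H ℝ) : Prop :=
  ∃ (k : ℕ) (q : Fin k → MvPolynomial H ℝ), p = ∑ i, (q i) ^ 2

/-- Evaluation of a polynomial `Bp ∈ ℝ[t, b]` (a polynomial in the time variable `t`
whose coefficients are polynomials in the belief variables `b h`, `h ∈ H`) at a real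
time `t` and a belief vector `b`. -/
noncomputable def polyEval {H : Type*} [Fintype H]
    (Bp : Polynomial (MvPolynomial H ℝ)) (t : ℝ) (b : H → ℝ) : ℝ :=
  MvPolynomial.eval b (Polynomial.eval (MvPolynomial.C t) Bp)

/-- **Corollary 1 (SOS conditions certify the teaching performance).**
Let `Δ = stdSimplex ℝ H`, let the belief-update maps `f z (·, y)` be rational with
numerator polynomials `S z y h'` and denominator `R z y` positive on `Δ`. Suppose there
exist a polynomial barrier `Bp ∈ ℝ[t, b]` whose coefficients have total degree at most `d`
in the `b`-variables, an SOS polynomial `pf`, and constants `s₁, s₂ > 0` such that: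
(19) `B(tstar, ·) + pf·(b hstar − lam) − s₁` is SOS;
(20) `−B(0, p₀) − s₂ > 0`; and
(21) for every `t ∈ {1,…,tstar}`, `z ∈ Z`, `y ∈ Y` there is an SOS polynomial `Q` with
`Q(b) = −R(b)^d · (B(t, S(b)/R(b)) − B(t−1, b))` wherever `R(b) ≠ 0`.
Then every switched trajectory with `b 0 = p₀` satisfies `(b tstar) hstar ≥ lam`. -/
theorem sos_barrier_certifies_teaching_performance
    {H Z Y : Type*} [Fintype H] [Nonempty H] [Fintype Z] [Nonempty Z]
    [Fintype Y] [Nonempty Y]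
    (f : Z → ↥(stdSimplex ℝ H) × Y → ↥(stdSimplex ℝ H))
    (p₀ : ↥(stdSimplex ℝ H)) (hstar : H) (lam : ℝ)
    (hlam0 : 0 < lam) (hlam1 : lam ≤ 1)
    (tstar : ℕ) (htstar : 1 ≤ tstar)
    -- rational belief-update dynamics
    (S : Z → Y → H → MvPolynomial H ℝ) (R : Z → Y → MvPolynomial H ℝ)
    (hRpos : ∀ (z : Z) (y : Y) (b : ↥(stdSimplex ℝ H)),
      0 < MvPolynomial.eval b.val (R z y))
    (hfrat : ∀ (z : Z) (y : Y) (b : ↥(stdSimplex ℝ H)) (h' : H),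
      (f z (b, y)).val h' =
        MvPolynomial.eval b.val (S z y h') / MvPolynomial.eval b.val (R z y))
    -- polynomial barrier of degree at most d in the belief variables
    (Bp : Polynomial (MvPolynomial H ℝ)) (d : ℕ)
    (hdeg : ∀ n, (Bp.coeff n).totalDegree ≤ d)
    (pf : MvPolynomial H ℝ) (hpf : IsSOS pf)
    (s₁ s₂ : ℝ) (hs₁ : 0 < s₁) (hs₂ : 0 < s₂)
    -- (19)
    (h19 : IsSOS (Polynomial.eval (MvPolynomial.C ((tstar : ℝ))) Bp +
      pf * (X hstar - C lam) - C s₁))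
    -- (20)
    (h20 : 0 < -polyEval Bp 0 p₀.val - s₂)
    -- (21)
    (h21 : ∀ t : ℕ, 1 ≤ t → t ≤ tstar → ∀ (z : Z) (y : Y),
      ∃ Q : MvPolynomial H ℝ, IsSOS Q ∧
        ∀ b : H → ℝ, MvPolynomial.eval b (R z y) ≠ 0 →
          MvPolynomial.eval b Q =
            -(MvPolynomial.eval b (R z y)) ^ d *
              (polyEval Bp (t : ℝ)
                  (fun h' => MvPolynomial.eval b (S z y h') / MvPolynomial.eval b (R z y)) -
                polyEval Bp ((t : ℝ) - 1) b))
    -- switched trajectory over horizon tstar starting at p₀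
    (b : ℕ → ↥(stdSimplex ℝ H)) (hb0 : b 0 = p₀)
    (hstep : ∀ t, 1 ≤ t → t ≤ tstar → ∃ (z : Z) (y : Y), b t = f z (b (t - 1), y)) :
    lam ≤ (b tstar).val hstar := by
  have sos_nonneg : ∀ {p : MvPolynomial H ℝ}, IsSOS p → ∀ v : H → ℝ,
      0 ≤ MvPolynomial.eval v p := by
    rintro p ⟨k, q, rfl⟩ v
    simp only [map_sum, map_pow]
    exact Finset.sum_nonneg fun i _ => sq_nonneg _
  -- barrier decreases along the trajectory
  have key : ∀ t : ℕ, t ≤ tstar → polyEval Bp (t : ℝ) (b t).val ≤ polyEval Bp 0 p₀.val := by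
    intro t
    induction t with
    | zero => intro _; rw [hb0]; norm_num
    | succ n ih =>
      intro hle
      have ihn := ih (le_trans (Nat.le_succ n) hle)
      obtain ⟨z, y, hzy⟩ := hstep (n + 1) (Nat.succ_le_succ (Nat.zero_le n)) hle
      obtain ⟨Q, hQsos, hQ⟩ := h21 (n + 1) (Nat.succ_le_succ (Nat.zero_le n)) hle z y
      have hRne : MvPolynomial.eval (b n).val (R z y) ≠ 0 :=
        ne_of_gt (hRpos z y (b n))
      have hQval := hQ (b n).val hRne
      have hQnn := sos_nonneg hQsos (b n).val
      rw [hQval] at hQnn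
      have hRpow : (0 : ℝ) < (MvPolynomial.eval (b n).val (R z y)) ^ d :=
        pow_pos (hRpos z y (b n)) d
      have hdiff : polyEval Bp ((n + 1 : ℕ) : ℝ)
          (fun h' => MvPolynomial.eval (b n).val (S z y h') /
            MvPolynomial.eval (b n).val (R z y)) -
          polyEval Bp (((n + 1 : ℕ) : ℝ) - 1) (b n).val ≤ 0 := by
        nlinarith [hQnn, hRpow]
      have hbsucc : (b (n + 1)).val = fun h' =>
          MvPolynomial.eval (b n).val (S z y h') / MvPolynomial.eval (b n).val (R z y) := by
        funext h'
        have : n + 1 - 1 = n := rfl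
        rw [hzy]
        simp only [this]
        exact hfrat z y (b n) h'
      have hcast : ((n + 1 : ℕ) : ℝ) - 1 = (n : ℝ) := by push_cast; ring
      rw [hbsucc]
      calc polyEval Bp ((n + 1 : ℕ) : ℝ) _ ≤ polyEval Bp (((n + 1 : ℕ) : ℝ) - 1) (b n).val :=
            by linarith [hdiff]
        _ = polyEval Bp (n : ℝ) (b n).val := by rw [hcast]
        _ ≤ polyEval Bp 0 p₀.val := ihn
  have hB : polyEval Bp (tstar : ℝ) (b tstar).val < -s₂ := by
    have := key tstar le_rfl
    linarith
  -- use (19)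
  have h19e := sos_nonneg h19 (b tstar).val
  simp only [map_add, map_sub, map_mul, MvPolynomial.eval_C, MvPolynomial.eval_X] at h19e
  have hBe : MvPolynomial.eval (b tstar).val
      (Polynomial.eval (MvPolynomial.C ((tstar : ℝ))) Bp)
      = polyEval Bp (tstar : ℝ) (b tstar).val := rfl
  rw [hBe] at h19e
  have hpfnn := sos_nonneg hpf (b tstar).val
  by_contra hcon
  push_neg at hcon
  nlinarith [h19e, hpfnn, hB, hs₁, hs₂, mul_nonneg hpfnn (le_of_lt (sub_pos.mpr hcon))]
end
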